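/- arXiv:1606.03854 — 3 statements merged into one kernel-verified Lean document; each statement's English description precedes it below -/
import Mathlib

section
/- Let H ∈ (0,1/2), λ > 0, θ > 0, and define R(τ) = θ²(Γ(2H+1) cosh(λτ)/(2λ^{2H}) - H ∫₀^τ cosh(λ(τ-u)) u^{2H-1} du) for τ ≥ 0. Then R(τ) = R(0) - (θ²/2) τ^{2H} + o(τ^{2H}) as τ → 0⁺, where R(0) = θ² Γ(2H+1)/(2λ^{2H}). -/
/-!
Subtracting `R 0` leaves `θ² Γ(2H+1) / (2λ^{2H}) · (cosh(λτ) - 1)`, which is `O(τ) = o(τ^{2H})`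
because `2H < 1`, and `-θ² H ∫₀^τ cosh(λ(τ-u)) u^{2H-1} du`. The weight `u^{2H-1}` has mass
`τ^{2H}/(2H)` on `[0, τ]`, where `cosh(λ(τ-u))` stays within `o(1)` of `1`; so the integral term is
`-(θ²/2) τ^{2H} + o(τ^{2H})`.
-/

open Asymptotics Filter Topology

theorem isLittleO_rpow_rpow_nhdsGT_zero {a b : ℝ} (hab : a < b) :
    (fun x : ℝ => x ^ b) =o[𝓝[>] 0] fun x => x ^ a := by
  have hsmall : (fun x : ℝ => x ^ (b - a)) =o[𝓝[>] 0] fun _ => (1 : ℝ) := by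
    rw [isLittleO_one_iff]
    have := (Real.continuousAt_rpow_const 0 (b - a) (Or.inr (sub_pos.2 hab).le)).tendsto
    rw [Real.zero_rpow (sub_pos.2 hab).ne'] at this
    exact this.mono_left nhdsWithin_le_nhds
  refine (hsmall.mul_isBigO (isBigO_refl (fun x : ℝ => x ^ a) _)).congr' ?_ ?_
  · filter_upwards [self_mem_nhdsWithin] with x hx
    rw [← Real.rpow_add hx, sub_add_cancel]
  · filter_upwards with x
    rw [one_mul]

theorem DifferentiableAt.sub_isLittleO_rpow_nhdsGT_zero {f : ℝ → ℝ}
    (hf : DifferentiableAt ℝ f 0) {a : ℝ} (ha : a < 1) :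
    (fun x => f x - f 0) =o[𝓝[>] 0] fun x => x ^ a := by
  have hlin : (fun x => f x - f 0) =O[𝓝[>] 0] fun x => x := by
    simpa using hf.isBigO_sub.mono nhdsWithin_le_nhds
  refine hlin.trans_isLittleO ((isLittleO_rpow_rpow_nhdsGT_zero ha).congr' ?_ .rfl)
  filter_upwards with x
  rw [Real.rpow_one]

theorem integral_rpow_sub_one {a : ℝ} (ha : 0 < a) (τ : ℝ) :
    ∫ u in (0 : ℝ)..τ, u ^ (a - 1) = τ ^ a / a := by
  rw [integral_rpow (Or.inl (by linarith)), sub_add_cancel, Real.zero_rpow ha.ne', sub_zero]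

theorem isLittleO_integral_comp_sub_mul_rpow_sub_one {f : ℝ → ℝ} (hf : Continuous f) {a : ℝ}
    (ha : 0 < a) :
    (fun τ => (∫ u in (0 : ℝ)..τ, f (τ - u) * u ^ (a - 1)) - f 0 * τ ^ a / a)
      =o[𝓝[>] 0] fun τ => τ ^ a := by
  have hweight (τ : ℝ) : IntervalIntegrable (fun u : ℝ => u ^ (a - 1)) MeasureTheory.volume 0 τ :=
    intervalIntegral.intervalIntegrable_rpow' (by linarith)
  have hdiff (τ : ℝ) : (∫ u in (0 : ℝ)..τ, f (τ - u) * u ^ (a - 1)) - f 0 * τ ^ a / a =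
      ∫ u in (0 : ℝ)..τ, (f (τ - u) - f 0) * u ^ (a - 1) := by
    rw [mul_div_assoc, ← integral_rpow_sub_one ha, ← intervalIntegral.integral_const_mul,
      ← intervalIntegral.integral_sub]
    · simp only [sub_mul]
    · exact (hweight τ).continuousOn_mul (by fun_prop)
    · exact (hweight τ).const_mul _
  simp only [hdiff]
  rw [isLittleO_iff]
  intro c hc
  obtain ⟨δ, hδ, hclose⟩ := Metric.continuousAt_iff.1 hf.continuousAt (c * a) (by positivity)
  filter_upwards [Ioo_mem_nhdsGT hδ] with τ ⟨hτ, hτδ⟩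
  rw [Real.norm_of_nonneg (Real.rpow_nonneg hτ.le a)]
  calc ‖∫ u in (0 : ℝ)..τ, (f (τ - u) - f 0) * u ^ (a - 1)‖
      ≤ ∫ u in (0 : ℝ)..τ, c * a * u ^ (a - 1) := by
        refine intervalIntegral.norm_integral_le_of_norm_le hτ.le
          (.of_forall fun u hu => ?_) ((hweight τ).const_mul _)
        have hdist : dist (τ - u) 0 < δ := by
          rw [Real.dist_eq, sub_zero, abs_of_nonneg (by linarith [hu.2])]
          linarith [hu.1]
        rw [norm_mul, Real.norm_of_nonneg (Real.rpow_nonneg hu.1.le _)]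
        exact mul_le_mul_of_nonneg_right (le_of_lt (hclose hdist))
          (Real.rpow_nonneg hu.1.le _)
    _ = c * τ ^ a := by
        rw [intervalIntegral.integral_const_mul, integral_rpow_sub_one ha]
        field_simp

theorem fou_cov_expansion_general (H lam θ : ℝ) (hH : H ∈ Set.Ioo (0 : ℝ) (1 / 2))
    (R : ℝ → ℝ)
    (hR : ∀ τ : ℝ, 0 ≤ τ → R τ =
      θ ^ 2 * (Real.Gamma (2 * H + 1) * Real.cosh (lam * τ) / (2 * lam ^ (2 * H)) -
        H * ∫ u in (0 : ℝ)..τ, Real.cosh (lam * (τ - u)) * u ^ (2 * H - 1))) :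
    R 0 = θ ^ 2 * Real.Gamma (2 * H + 1) / (2 * lam ^ (2 * H)) ∧
    (fun τ => R τ - (R 0 - θ ^ 2 / 2 * τ ^ (2 * H)))
      =o[nhdsWithin 0 (Set.Ioi 0)] fun τ => τ ^ (2 * H) := by
  obtain ⟨hH0, hH2⟩ := hH
  have hR0 : R 0 = θ ^ 2 * Real.Gamma (2 * H + 1) / (2 * lam ^ (2 * H)) := by
    simp [hR 0 le_rfl, mul_div_assoc]
  refine ⟨hR0, ?_⟩
  set f : ℝ → ℝ := fun s => Real.cosh (lam * s)
  have hcosh := (DifferentiableAt.sub_isLittleO_rpow_nhdsGT_zero (f := f) (by fun_prop)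
    (a := 2 * H) (by linarith)).const_mul_left (θ ^ 2 * Real.Gamma (2 * H + 1) / (2 * lam ^ (2 * H)))
  have hintegral := (isLittleO_integral_comp_sub_mul_rpow_sub_one (f := f) (by fun_prop)
    (a := 2 * H) (by linarith)).const_mul_left (θ ^ 2 * H)
  refine (hcosh.sub hintegral).congr' ?_ .rfl
  filter_upwards [self_mem_nhdsWithin] with τ hτ
  simp only [f, hR τ (le_of_lt hτ), hR0, mul_zero, Real.cosh_zero]
  field_simp
  ring

/-- The covariance `R(τ) = θ²(Γ(2H+1) cosh(λτ)/(2λ^{2H}) - H ∫₀^τ cosh(λ(τ-u)) u^{2H-1} du)`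
of the stationary fOU process with `H ∈ (0,1/2)`, `λ > 0`, `θ > 0` satisfies
`R(τ) = R(0) - (θ²/2) τ^{2H} + o(τ^{2H})` as `τ → 0⁺`, where
`R(0) = θ² Γ(2H+1)/(2λ^{2H})`. -/
theorem fou_cov_expansion (H lam θ : ℝ) (hH : H ∈ Set.Ioo (0 : ℝ) (1 / 2))
    (hlam : 0 < lam) (hθ : 0 < θ) (R : ℝ → ℝ)
    (hR : ∀ τ : ℝ, 0 ≤ τ → R τ =
      θ ^ 2 * (Real.Gamma (2 * H + 1) * Real.cosh (lam * τ) / (2 * lam ^ (2 * H)) -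
        H * ∫ u in (0 : ℝ)..τ, Real.cosh (lam * (τ - u)) * u ^ (2 * H - 1))) :
    R 0 = θ ^ 2 * Real.Gamma (2 * H + 1) / (2 * lam ^ (2 * H)) ∧
    (fun τ => R τ - (R 0 - θ ^ 2 / 2 * τ ^ (2 * H)))
      =o[nhdsWithin 0 (Set.Ioi 0)] fun τ => τ ^ (2 * H) :=
  fou_cov_expansion_general H lam θ hH R hR
end

section
/- For H ∈ (0,1/2), λ > 0, the function R(τ) = cosh(λτ)·Γ(2H+1)/(2λ^{2H}) - H ∫₀^τ cosh(λ(τ-u)) u^{2H-1} du is infinitely differentiable on (0, ∞). -/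
open MeasureTheory Set intervalIntegral

noncomputable def GGaux (H lam : ℝ) (z : ℂ) : ℂ :=
  ∫ v in (0:ℝ)..1, Complex.cosh (lam * z * (1 - v)) * ((v ^ (2*H-1) : ℝ) : ℂ)

lemma norm_sinh_le_exp (w : ℂ) : ‖Complex.sinh w‖ ≤ Real.exp ‖w‖ := by
  rw [show Complex.sinh w = (Complex.exp w - Complex.exp (-w)) / 2 from rfl]
  have h1 : ‖Complex.exp w‖ ≤ Real.exp ‖w‖ := by
    rw [Complex.norm_exp]
    exact Real.exp_le_exp.2 ((Complex.abs_re_le_norm w).trans' (le_abs_self _))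
  have h2 : ‖Complex.exp (-w)‖ ≤ Real.exp ‖w‖ := by
    rw [Complex.norm_exp]
    refine Real.exp_le_exp.2 ?_
    simpa using (Complex.abs_re_le_norm (-w)).trans' (le_abs_self _)
  calc ‖(Complex.exp w - Complex.exp (-w)) / 2‖
      = ‖Complex.exp w - Complex.exp (-w)‖ / 2 := by
        rw [norm_div]; norm_num
    _ ≤ (‖Complex.exp w‖ + ‖Complex.exp (-w)‖) / 2 := by
        gcongr; exact norm_sub_le _ _
    _ ≤ Real.exp ‖w‖ := by linarith

lemma GGaux_hasDerivAt (H lam : ℝ) (hH : 0 < H) (hlam : 0 < lam) (z₀ : ℂ) :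
    HasDerivAt (GGaux H lam)
      (∫ v in (0:ℝ)..1,
        Complex.sinh (lam * z₀ * (1 - v)) * ((lam:ℂ) * (1 - (v:ℝ))) * ((v ^ (2*H-1) : ℝ) : ℂ)) z₀ := by
  set α : ℝ := 2*H - 1 with hαdef
  have hα : (-1:ℝ) < α := by simp only [hαdef]; linarith
  have hrpowInt : IntervalIntegrable (fun t : ℝ => t ^ α) volume 0 1 :=
    intervalIntegral.intervalIntegrable_rpow' hα
  have hrpowC : IntervalIntegrable (fun t : ℝ => ((t ^ α : ℝ) : ℂ)) volume 0 1 :=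
    ⟨hrpowInt.1.ofReal, hrpowInt.2.ofReal⟩
  have hIoc : Set.uIoc (0:ℝ) 1 = Set.Ioc (0:ℝ) 1 := Set.uIoc_of_le zero_le_one
  have hcontr : ContinuousOn (fun t : ℝ => ((t ^ α : ℝ) : ℂ)) (Set.Ioc (0:ℝ) 1) := by
    apply Complex.continuous_ofReal.comp_continuousOn
    intro t ht
    exact (Real.continuousAt_rpow_const t α (Or.inl (ne_of_gt ht.1))).continuousWithinAt
  have key := intervalIntegral.hasDerivAt_integral_of_dominated_loc_of_deriv_le
    (μ := volume) (a := (0:ℝ)) (b := 1) (x₀ := z₀) (s := Metric.ball z₀ 1)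
    (F := fun x t => Complex.cosh (lam * x * (1 - t)) * ((t ^ α : ℝ) : ℂ))
    (F' := fun x t => Complex.sinh (lam * x * (1 - t)) * ((lam:ℂ) * (1 - (t:ℝ))) * ((t ^ α : ℝ) : ℂ))
    (bound := fun t => Real.exp (lam * (‖z₀‖ + 1)) * lam * t ^ α)
    (Metric.ball_mem_nhds z₀ zero_lt_one) ?_ ?_ ?_ ?_ ?_ ?_
  · exact key.2
  · -- measurability of F x
    filter_upwards with x
    rw [hIoc]
    refine ContinuousOn.aestronglyMeasurable ?_ measurableSet_Ioc
    exact ((Complex.continuous_cosh.comp (by fun_prop)).continuousOn).mul hcontr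
  · -- integrability of F z₀
    refine hrpowC.continuousOn_mul ?_
    exact (Complex.continuous_cosh.comp (by fun_prop)).continuousOn
  · -- measurability of F' z₀
    rw [hIoc]
    refine ContinuousOn.aestronglyMeasurable ?_ measurableSet_Ioc
    exact (((Complex.continuous_sinh.comp (by fun_prop)).mul (by fun_prop)).continuousOn).mul hcontr
  · -- bound
    filter_upwards with t ht x hx
    rw [hIoc] at ht
    have ht0 : 0 < t := ht.1
    have ht1 : t ≤ 1 := ht.2
    have hrnn : (0:ℝ) ≤ t ^ α := Real.rpow_nonneg ht0.le _
    have hxn : ‖x‖ ≤ ‖z₀‖ + 1 := by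
      have := mem_ball_iff_norm.mp hx
      calc ‖x‖ = ‖z₀ + (x - z₀)‖ := by ring_nf
        _ ≤ ‖z₀‖ + ‖x - z₀‖ := norm_add_le _ _
        _ ≤ ‖z₀‖ + 1 := by linarith
    have hnw : ‖(lam:ℂ) * x * (1 - (t:ℝ))‖ ≤ lam * (‖z₀‖ + 1) := by
      rw [norm_mul, norm_mul]
      have h1 : ‖((lam:ℝ):ℂ)‖ = lam := by
        rw [Complex.norm_real, Real.norm_eq_abs, abs_of_pos hlam]
      have h2 : ‖(1:ℂ) - ((t:ℝ):ℂ)‖ ≤ 1 := by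
        have : ((1:ℂ) - ((t:ℝ):ℂ)) = (((1 - t : ℝ)):ℂ) := by push_cast; ring
        rw [this, Complex.norm_real, Real.norm_eq_abs, abs_of_nonneg (by linarith)]
        linarith
      calc ‖((lam:ℝ):ℂ)‖ * ‖x‖ * ‖(1:ℂ) - ((t:ℝ):ℂ)‖
          ≤ lam * (‖z₀‖ + 1) * 1 := by
            rw [h1]
            exact mul_le_mul (mul_le_mul le_rfl hxn (norm_nonneg _) hlam.le) h2
              (norm_nonneg _) (by positivity)
        _ = lam * (‖z₀‖ + 1) := by ring
    have hsinh : ‖Complex.sinh ((lam:ℂ) * x * (1 - (t:ℝ)))‖ ≤ Real.exp (lam * (‖z₀‖ + 1)) :=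
      (norm_sinh_le_exp _).trans (Real.exp_le_exp.2 hnw)
    have hc : ‖(lam:ℂ) * (1 - (t:ℝ))‖ ≤ lam := by
      rw [norm_mul]
      have h1 : ‖((lam:ℝ):ℂ)‖ = lam := by
        rw [Complex.norm_real, Real.norm_eq_abs, abs_of_pos hlam]
      have h2 : ‖(1:ℂ) - ((t:ℝ):ℂ)‖ ≤ 1 := by
        have : ((1:ℂ) - ((t:ℝ):ℂ)) = (((1 - t : ℝ)):ℂ) := by push_cast; ring
        rw [this, Complex.norm_real, Real.norm_eq_abs, abs_of_nonneg (by linarith)]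
        linarith
      calc ‖((lam:ℝ):ℂ)‖ * ‖(1:ℂ) - ((t:ℝ):ℂ)‖ ≤ lam * 1 := by
            rw [h1]; exact mul_le_mul le_rfl h2 (norm_nonneg _) hlam.le
        _ = lam := by ring
    calc ‖Complex.sinh ((lam:ℂ) * x * (1 - (t:ℝ))) * ((lam:ℂ) * (1 - (t:ℝ))) * ((t ^ α : ℝ) : ℂ)‖
        = ‖Complex.sinh ((lam:ℂ) * x * (1 - (t:ℝ)))‖ * ‖(lam:ℂ) * (1 - (t:ℝ))‖ * (t ^ α) := by
          rw [norm_mul, norm_mul, Complex.norm_real, Real.norm_eq_abs, abs_of_nonneg hrnn]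
      _ ≤ Real.exp (lam * (‖z₀‖ + 1)) * lam * t ^ α := by
          exact mul_le_mul (mul_le_mul hsinh hc (norm_nonneg _) (Real.exp_pos _).le)
            le_rfl hrnn (by positivity)
  · -- bound integrable
    exact (hrpowInt.const_mul _)
  · -- derivative
    filter_upwards with t _ x _
    have hx1 : HasDerivAt (fun x : ℂ => (lam:ℂ) * x * (1 - (t:ℝ))) ((lam:ℂ) * (1 - (t:ℝ))) x := by
      simpa [mul_comm, mul_assoc] using
        (((hasDerivAt_id x).const_mul ((lam:ℝ):ℂ)).mul_const ((1:ℂ) - ((t:ℝ):ℂ)))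
    have := ((Complex.hasDerivAt_cosh ((lam:ℂ) * x * (1 - (t:ℝ)))).comp x hx1).mul_const
      (((t ^ α : ℝ)) : ℂ)
    simpa [mul_comm, mul_assoc, mul_left_comm] using this

lemma GGaux_smooth (H lam : ℝ) (hH : 0 < H) (hlam : 0 < lam) :
    ContDiff ℝ (⊤ : ℕ∞) (fun τ : ℝ => (GGaux H lam τ).re) := by
  have hdiff : Differentiable ℂ (GGaux H lam) :=
    fun z => (GGaux_hasDerivAt H lam hH hlam z).differentiableAt
  have han : AnalyticOnNhd ℂ (GGaux H lam) Set.univ :=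
    hdiff.differentiableOn.analyticOnNhd isOpen_univ
  have hc : ContDiff ℂ ⊤ (GGaux H lam) := han.contDiff
  have : ContDiff ℝ (⊤ : ℕ∞) (GGaux H lam) := (hc.restrict_scalars ℝ).of_le le_top
  exact Complex.reCLM.contDiff.comp (this.comp Complex.ofRealCLM.contDiff)

lemma integral_eq (H lam : ℝ) (hH : 0 < H) (hlam : 0 < lam) {τ : ℝ} (hτ : 0 < τ) :
    (∫ u in (0:ℝ)..τ, Real.cosh (lam * (τ - u)) * u ^ (2*H-1)) =
      τ ^ (2*H) * (GGaux H lam τ).re := by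
  set α : ℝ := 2*H - 1 with hαdef
  have hre : (GGaux H lam τ).re = ∫ v in (0:ℝ)..1, Real.cosh (lam * τ * (1 - v)) * v ^ α := by
    have h1 : GGaux H lam τ =
        ((∫ v in (0:ℝ)..1, Real.cosh (lam * τ * (1 - v)) * v ^ α : ℝ) : ℂ) := by
      rw [GGaux, ← intervalIntegral.integral_ofReal]
      apply intervalIntegral.integral_congr
      intro v _
      push_cast [Complex.ofReal_cosh]
      ring
    rw [h1, Complex.ofReal_re]
  have h2 := intervalIntegral.integral_comp_mul_left (a := (0:ℝ)) (b := 1)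
    (fun u => Real.cosh (lam * (τ - u)) * u ^ α) hτ.ne'
  simp only [mul_zero, mul_one, smul_eq_mul] at h2
  have h3 : (∫ v in (0:ℝ)..1, Real.cosh (lam * (τ - τ * v)) * (τ * v) ^ α) =
      τ ^ α * ∫ v in (0:ℝ)..1, Real.cosh (lam * τ * (1 - v)) * v ^ α := by
    rw [← intervalIntegral.integral_const_mul]
    apply intervalIntegral.integral_congr
    intro v hv
    rw [Set.uIcc_of_le zero_le_one] at hv
    show Real.cosh (lam * (τ - τ * v)) * (τ * v) ^ α =
      τ ^ α * (Real.cosh (lam * τ * (1 - v)) * v ^ α)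
    rw [Real.mul_rpow hτ.le hv.1, show lam * (τ - τ * v) = lam * τ * (1 - v) by ring]
    ring
  have h4 : (∫ u in (0:ℝ)..τ, Real.cosh (lam * (τ - u)) * u ^ α) =
      τ * ∫ v in (0:ℝ)..1, Real.cosh (lam * (τ - τ * v)) * (τ * v) ^ α := by
    rw [h2, ← mul_assoc, mul_inv_cancel₀ hτ.ne', one_mul]
  rw [h4, h3, hre]
  rw [show (2*H : ℝ) = 1 + α by rw [hαdef]; ring, Real.rpow_add hτ, Real.rpow_one]
  ring

/-- For `H ∈ (0,1/2)` and `λ > 0`, the function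
`R(τ) = cosh(λτ)·Γ(2H+1)/(2λ^{2H}) - H ∫₀^τ cosh(λ(τ-u)) u^{2H-1} du`
is infinitely differentiable on `(0, ∞)`. -/
theorem fou_cov_smooth (H lam : ℝ) (hH : H ∈ Set.Ioo (0 : ℝ) (1 / 2)) (hlam : 0 < lam) :
    ContDiffOn ℝ (⊤ : ℕ∞)
      (fun τ => Real.cosh (lam * τ) * Real.Gamma (2 * H + 1) / (2 * lam ^ (2 * H)) -
        H * ∫ u in (0 : ℝ)..τ, Real.cosh (lam * (τ - u)) * u ^ (2 * H - 1))
      (Set.Ioi (0 : ℝ)) := by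
  obtain ⟨hH0, _⟩ := hH
  have hsmooth : ContDiffOn ℝ (⊤ : ℕ∞)
      (fun τ : ℝ => Real.cosh (lam * τ) * Real.Gamma (2 * H + 1) / (2 * lam ^ (2 * H)) -
        H * (τ ^ (2*H) * (GGaux H lam τ).re)) (Set.Ioi (0:ℝ)) := by
    have h1 : ContDiff ℝ (⊤ : ℕ∞)
        (fun τ : ℝ => Real.cosh (lam * τ) * Real.Gamma (2 * H + 1) / (2 * lam ^ (2 * H))) :=
      ((Real.contDiff_cosh.comp (contDiff_const.mul contDiff_id)).mul contDiff_const).div_const _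
    have h2 : ContDiffOn ℝ (⊤ : ℕ∞) (fun τ : ℝ => τ ^ (2*H)) (Set.Ioi (0:ℝ)) :=
      fun τ hτ => (Real.contDiffAt_rpow_const_of_ne (ne_of_gt hτ)).contDiffWithinAt
    exact h1.contDiffOn.sub
      (contDiffOn_const.mul (h2.mul (GGaux_smooth H lam hH0 hlam).contDiffOn))
  refine hsmooth.congr fun τ hτ => ?_
  rw [integral_eq H lam hH0 hlam hτ]
end

section
/- Let λ > 0, H ∈ (0,1/2), θ > 0. The covariance of the stationary fractional Ornstein–Uhlenbeck process satisfies, for t ≥ 0: θ²·H(2H-1)·e^{-λt} ∫₀^t ∫_{-∞}^0 e^{λ(τ₁+τ₂)} |τ₁-τ₂|^{2H-2} dτ₁ dτ₂ + θ² e^{-λt} Γ(2H+1)/(2λ^{2H}) = θ² cosh(λt) Γ(2H+1)/(2λ^{2H}) - H θ² ∫₀^t cosh(λ(t-u)) u^{2H-1} du. -/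
open MeasureTheory Real Set Filter Topology Asymptotics

/-!
Substituting `x = τ₂ - τ₁` turns the inner integral into `e^{2λτ₂} ∫_{τ₂}^∞ x^{2H-2} e^{-λx} dx`.
Integrating by parts in `x` trades this tail of a Gamma integral for the tail
`G(τ) = ∫_τ^∞ x^{2H-1} e^{-λx} dx` and a boundary term. Since
`(e^{2λτ} G(τ))' = 2λ e^{2λτ} G(τ) - e^{λτ} τ^{2H-1}`, the `τ₂`-integral is then evaluated by the
fundamental theorem of calculus. Splitting `cosh` into exponentials expresses the right-hand side
through the same `G`, and `G(0) = Γ(2H)/λ^{2H}`.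
-/

theorem integral_Iio_comp_sub_left {E : Type*} [NormedAddCommGroup E] [NormedSpace ℝ E]
    (g : ℝ → E) (a τ : ℝ) :
    ∫ x in Iio a, g (τ - x) = ∫ y in Ioi (τ - a), g y := by
  have hpre : (τ - ·) ⁻¹' Ioi (τ - a) = Iio a := by ext x; simp
  rw [← hpre]
  exact (Measure.measurePreserving_sub_left volume τ).setIntegral_preimage_emb
    (Homeomorph.subLeft τ).measurableEmbedding g _

theorem integrableOn_rpow_mul_exp_neg_mul_Ioi (s : ℝ) {lam c : ℝ} (hlam : 0 < lam) (hc : 0 < c) :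
    IntegrableOn (fun x => x ^ s * exp (-(lam * x))) (Ioi c) := by
  refine integrable_of_isBigO_exp_neg (half_pos hlam) (fun x hx => ?_) ?_
  · exact ((continuousAt_rpow_const _ _ (Or.inl (hc.trans_le hx).ne')).mul
      (by fun_prop)).continuousWithinAt
  · have hdecay := (tendsto_rpow_mul_exp_neg_mul_atTop_nhds_zero s _ (half_pos hlam)).isBigO_one ℝ
    refine ((hdecay.mul (isBigO_refl (fun x => exp (-(lam / 2) * x)) atTop)).congr
      (fun x => ?_) (fun x => one_mul _))
    rw [mul_assoc, ← exp_add]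
    ring_nf

/-- `gammaTail lam s c = lam ^ (-s) * Γ(s, lam * c)`, a rescaled upper incomplete Gamma function. -/
noncomputable def gammaTail (lam s c : ℝ) : ℝ := ∫ x in Ioi c, x ^ (s - 1) * exp (-(lam * x))

section
variable {lam s : ℝ}

theorem integrableOn_rpow_mul_exp_neg_mul_Ioi_zero (hlam : 0 < lam) (hs : 0 < s) :
    IntegrableOn (fun x => x ^ (s - 1) * exp (-(lam * x))) (Ioi 0) := by
  simpa using integrableOn_rpow_mul_exp_neg_mul_rpow (p := 1) (by linarith) one_pos hlam

theorem gammaTail_zero (hlam : 0 < lam) (hs : 0 < s) : gammaTail lam s 0 = Gamma s / lam ^ s := by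
  rw [gammaTail, integral_rpow_mul_exp_neg_mul_Ioi hs hlam, one_div, inv_rpow hlam.le]
  ring

theorem gammaTail_eq_sub_integral {a b : ℝ}
    (hint : IntegrableOn (fun x => x ^ (s - 1) * exp (-(lam * x))) (Ioi a)) (hab : a ≤ b) :
    gammaTail lam s b = gammaTail lam s a - ∫ x in a..b, x ^ (s - 1) * exp (-(lam * x)) := by
  rw [← intervalIntegral.integral_Ioi_sub_Ioi hint hab, gammaTail, gammaTail, sub_sub_cancel]

theorem hasDerivAt_gammaTail (hlam : 0 < lam) {c : ℝ} (hc : 0 < c) :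
    HasDerivAt (gammaTail lam s) (-(c ^ (s - 1) * exp (-(lam * c)))) c := by
  have hint := integrableOn_rpow_mul_exp_neg_mul_Ioi (s - 1) hlam (half_pos hc)
  have hcont : ContinuousOn (fun x : ℝ => x ^ (s - 1) * exp (-(lam * x))) (Ioi 0) := fun x hx =>
    ((continuousAt_rpow_const _ _ (Or.inl (ne_of_gt hx))).mul (by fun_prop)).continuousWithinAt
  have hprim : (fun x => gammaTail lam s (c / 2) - ∫ y in c / 2..x, y ^ (s - 1) * exp (-(lam * y)))
      =ᶠ[𝓝 c] gammaTail lam s := by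
    filter_upwards [Ioi_mem_nhds (half_lt_self hc)] with x hx
    exact (gammaTail_eq_sub_integral hint hx.le).symm
  refine ((intervalIntegral.integral_hasDerivAt_right ?_ ?_ ?_).const_sub _).congr_of_eventuallyEq
    hprim.symm
  · exact (intervalIntegrable_iff_integrableOn_Ioc_of_le (half_lt_self hc).le).2
      (hint.mono_set Ioc_subset_Ioi_self)
  · exact hcont.stronglyMeasurableAtFilter isOpen_Ioi c hc
  · exact hcont.continuousAt (Ioi_mem_nhds hc)

theorem continuousOn_gammaTail (hlam : 0 < lam) (hs : 0 < s) (t : ℝ) :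
    ContinuousOn (gammaTail lam s) (Icc 0 t) := by
  have hint := integrableOn_rpow_mul_exp_neg_mul_Ioi_zero hlam hs
  refine ContinuousOn.congr (continuousOn_const.sub ?_) fun x hx =>
    gammaTail_eq_sub_integral hint hx.1
  have hint_Icc : IntegrableOn (fun x => x ^ (s - 1) * exp (-(lam * x))) (Icc 0 t) := by
    rw [integrableOn_Icc_iff_integrableOn_Ioc]
    exact hint.mono_set Ioc_subset_Ioi_self
  exact (intervalIntegral.continuousOn_primitive hint_Icc).congr fun x hx =>
    intervalIntegral.integral_of_le hx.1

theorem sub_one_mul_gammaTail_sub_one (hlam : 0 < lam) {c : ℝ} (hc : 0 < c) :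
    (s - 1) * gammaTail lam (s - 1) c =
      lam * gammaTail lam s c - c ^ (s - 1) * exp (-(lam * c)) := by
  have hrpow : ∀ x ∈ Ioi c, HasDerivAt (fun x => x ^ (s - 1)) ((s - 1) * x ^ (s - 1 - 1)) x :=
    fun x hx => hasDerivAt_rpow_const (Or.inl (hc.trans hx).ne')
  have hexp : ∀ x ∈ Ioi c, HasDerivAt (fun x => exp (-(lam * x))) (-lam * exp (-(lam * x))) x :=
    fun x _ => by simpa [mul_comm] using ((hasDerivAt_id x).const_mul lam).neg.exp
  have hcont : ContinuousAt (fun x => x ^ (s - 1) * exp (-(lam * x))) c :=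
    (continuousAt_rpow_const _ _ (Or.inl hc.ne')).mul (by fun_prop)
  have hibp := integral_Ioi_mul_deriv_eq_deriv_mul hrpow hexp
    (IntegrableOn.congr_fun
      ((integrableOn_rpow_mul_exp_neg_mul_Ioi (s - 1) hlam hc).const_mul (-lam))
      (fun x _ => by simp only [Pi.mul_apply]; ring) measurableSet_Ioi)
    (IntegrableOn.congr_fun
      ((integrableOn_rpow_mul_exp_neg_mul_Ioi (s - 1 - 1) hlam hc).const_mul (s - 1))
      (fun x _ => by simp only [Pi.mul_apply]; ring) measurableSet_Ioi)
    (hcont.tendsto.mono_left nhdsWithin_le_nhds)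
    ((tendsto_rpow_mul_exp_neg_mul_atTop_nhds_zero (s - 1) lam hlam).congr fun x => by
      simp only [Pi.mul_apply, neg_mul])
  simp only [mul_left_comm _ (-lam), mul_assoc, integral_const_mul] at hibp
  rw [gammaTail, gammaTail]
  linarith

theorem integral_Iio_exp_mul_abs_sub_rpow {τ : ℝ} (hτ : 0 ≤ τ) :
    ∫ τ₁ in Iio 0, exp (lam * (τ₁ + τ)) * |τ₁ - τ| ^ (s - 2) =
      exp (2 * lam * τ) * gammaTail lam (s - 1) τ := by
  have hintegrand : ∀ τ₁ ∈ Iio (0 : ℝ), exp (lam * (τ₁ + τ)) * |τ₁ - τ| ^ (s - 2) =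
      exp (2 * lam * τ) * ((τ - τ₁) ^ (s - 1 - 1) * exp (-(lam * (τ - τ₁)))) := by
    intro τ₁ hτ₁
    rw [abs_sub_comm, abs_of_pos (by linarith [mem_Iio.1 hτ₁]), mul_left_comm, ← exp_add]
    ring_nf
  rw [setIntegral_congr_fun measurableSet_Iio hintegrand, integral_const_mul,
    integral_Iio_comp_sub_left (fun x => x ^ (s - 1 - 1) * exp (-(lam * x))), sub_zero, gammaTail]

theorem hasDerivAt_exp_mul_gammaTail (hlam : 0 < lam) {τ : ℝ} (hτ : 0 < τ) :
    HasDerivAt (fun x => exp (2 * lam * x) * gammaTail lam s x)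
      (2 * lam * (exp (2 * lam * τ) * gammaTail lam s τ) - τ ^ (s - 1) * exp (lam * τ)) τ := by
  have hexp : HasDerivAt (fun x => exp (2 * lam * x)) (exp (2 * lam * τ) * (2 * lam)) τ := by
    simpa using ((hasDerivAt_id τ).const_mul (2 * lam)).exp
  refine (hexp.mul (hasDerivAt_gammaTail hlam hτ)).congr_deriv ?_
  rw [show exp (lam * τ) = exp (2 * lam * τ) * exp (-(lam * τ)) by rw [← exp_add]; ring_nf]
  ring

theorem sub_one_mul_integral_exp_mul_gammaTail_sub_one (hlam : 0 < lam) (hs : 0 < s) {t : ℝ}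
    (ht : 0 ≤ t) :
    (s - 1) * ∫ τ in 0..t, exp (2 * lam * τ) * gammaTail lam (s - 1) τ =
      (exp (2 * lam * t) * gammaTail lam s t - gammaTail lam s 0 -
        ∫ τ in 0..t, τ ^ (s - 1) * exp (lam * τ)) / 2 := by
  have hP : IntervalIntegrable (fun τ => τ ^ (s - 1) * exp (lam * τ)) volume 0 t :=
    (intervalIntegral.intervalIntegrable_rpow' (by linarith)).mul_continuousOn (by fun_prop)
  have hF : ContinuousOn (fun x => exp (2 * lam * x) * gammaTail lam s x) (Icc 0 t) :=
    (continuous_exp.comp (continuous_const.mul continuous_id)).continuousOn.mul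
      (continuousOn_gammaTail hlam hs t)
  have hD : IntervalIntegrable (fun τ => 2 * lam * (exp (2 * lam * τ) * gammaTail lam s τ) -
      τ ^ (s - 1) * exp (lam * τ)) volume 0 t :=
    ((hF.intervalIntegrable_of_Icc ht).const_mul _).sub hP
  have hFTC := intervalIntegral.integral_eq_sub_of_hasDerivAt_of_le ht hF
    (fun x hx => hasDerivAt_exp_mul_gammaTail hlam hx.1) hD
  have hintegrand : ∀ τ ∈ uIoc 0 t, (s - 1) * (exp (2 * lam * τ) * gammaTail lam (s - 1) τ) =
      ((2 * lam * (exp (2 * lam * τ) * gammaTail lam s τ) - τ ^ (s - 1) * exp (lam * τ)) -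
        τ ^ (s - 1) * exp (lam * τ)) / 2 := by
    intro τ hτ
    have hτ0 : 0 < τ := by rw [uIoc_of_le ht] at hτ; exact hτ.1
    rw [← mul_left_comm, sub_one_mul_gammaTail_sub_one hlam hτ0,
      show exp (lam * τ) = exp (2 * lam * τ) * exp (-(lam * τ)) by rw [← exp_add]; ring_nf]
    ring
  rw [← intervalIntegral.integral_const_mul, intervalIntegral.integral_congr_ae
    (Eventually.of_forall hintegrand), intervalIntegral.integral_div,
    intervalIntegral.integral_sub hD hP, hFTC]
  simp

theorem integral_cosh_mul_rpow (hlam : 0 < lam) (hs : 0 < s) {t : ℝ} (ht : 0 ≤ t) :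
    ∫ u in 0..t, cosh (lam * (t - u)) * u ^ (s - 1) =
      exp (lam * t) / 2 * (gammaTail lam s 0 - gammaTail lam s t) +
        exp (-(lam * t)) / 2 * ∫ u in 0..t, u ^ (s - 1) * exp (lam * u) := by
  have hrpow := intervalIntegral.intervalIntegrable_rpow' (a := 0) (b := t) (r := s - 1)
    (by linarith)
  have hcosh : ∀ u : ℝ, cosh (lam * (t - u)) * u ^ (s - 1) =
      exp (lam * t) / 2 * (u ^ (s - 1) * exp (-(lam * u))) +
        exp (-(lam * t)) / 2 * (u ^ (s - 1) * exp (lam * u)) := by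
    intro u
    rw [cosh_eq, show lam * (t - u) = lam * t + -(lam * u) by ring, exp_add,
      show -(lam * t + -(lam * u)) = -(lam * t) + lam * u by ring, exp_add]
    ring
  rw [intervalIntegral.integral_congr fun u _ => hcosh u,
    intervalIntegral.integral_add ((hrpow.mul_continuousOn (by fun_prop)).const_mul _)
      ((hrpow.mul_continuousOn (by fun_prop)).const_mul _),
    intervalIntegral.integral_const_mul, intervalIntegral.integral_const_mul,
    gammaTail_eq_sub_integral (integrableOn_rpow_mul_exp_neg_mul_Ioi_zero hlam hs) ht,
    sub_sub_cancel]

end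

theorem fou_cov_formula_general (lam H θ t : ℝ) (hlam : 0 < lam)
    (hH : H ∈ Set.Ioo (0 : ℝ) (1 / 2)) (ht : 0 ≤ t) :
    θ ^ 2 * (H * (2 * H - 1)) * Real.exp (-lam * t) *
        (∫ τ₂ in (0 : ℝ)..t, ∫ τ₁ in Set.Iio (0 : ℝ),
          Real.exp (lam * (τ₁ + τ₂)) * |τ₁ - τ₂| ^ (2 * H - 2)) +
      θ ^ 2 * Real.exp (-lam * t) * Real.Gamma (2 * H + 1) / (2 * lam ^ (2 * H)) =
    θ ^ 2 * Real.cosh (lam * t) * Real.Gamma (2 * H + 1) / (2 * lam ^ (2 * H)) -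
      H * θ ^ 2 * ∫ u in (0 : ℝ)..t, Real.cosh (lam * (t - u)) * u ^ (2 * H - 1) := by
  have h2H : 0 < 2 * H := by linarith [hH.1]
  have hinner : (∫ τ₂ in (0 : ℝ)..t, ∫ τ₁ in Iio (0 : ℝ),
      exp (lam * (τ₁ + τ₂)) * |τ₁ - τ₂| ^ (2 * H - 2)) =
      ∫ τ in 0..t, exp (2 * lam * τ) * gammaTail lam (2 * H - 1) τ :=
    intervalIntegral.integral_congr fun τ hτ =>
      integral_Iio_exp_mul_abs_sub_rpow (by rw [uIcc_of_le ht] at hτ; exact hτ.1)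
  have hGamma : Gamma (2 * H + 1) / (2 * lam ^ (2 * H)) = H * gammaTail lam (2 * H) 0 := by
    rw [Gamma_add_one h2H.ne', gammaTail_zero hlam h2H]
    field_simp
  have hexp : exp (lam * t) = exp (-(lam * t)) * exp (2 * lam * t) := by
    rw [← exp_add]; ring_nf
  rw [neg_mul, hinner, integral_cosh_mul_rpow hlam h2H ht, cosh_eq]
  simp only [mul_div_assoc, hGamma]
  linear_combination θ ^ 2 * H * exp (-(lam * t)) *
      sub_one_mul_integral_exp_mul_gammaTail_sub_one hlam h2H ht -
    θ ^ 2 * H * gammaTail lam (2 * H) t / 2 * hexp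

/-- For `λ > 0`, `H ∈ (0,1/2)`, `θ > 0` and `t ≥ 0`:
`θ² H(2H-1) e^{-λt} ∫₀^t ∫_{-∞}^0 e^{λ(τ₁+τ₂)} |τ₁-τ₂|^{2H-2} dτ₁ dτ₂`
`+ θ² e^{-λt} Γ(2H+1)/(2λ^{2H})`
`= θ² cosh(λt) Γ(2H+1)/(2λ^{2H}) - H θ² ∫₀^t cosh(λ(t-u)) u^{2H-1} du`. -/
theorem fou_cov_formula (lam H θ t : ℝ) (hlam : 0 < lam)
    (hH : H ∈ Set.Ioo (0 : ℝ) (1 / 2)) (hθ : 0 < θ) (ht : 0 ≤ t) :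
    θ ^ 2 * (H * (2 * H - 1)) * Real.exp (-lam * t) *
        (∫ τ₂ in (0 : ℝ)..t, ∫ τ₁ in Set.Iio (0 : ℝ),
          Real.exp (lam * (τ₁ + τ₂)) * |τ₁ - τ₂| ^ (2 * H - 2)) +
      θ ^ 2 * Real.exp (-lam * t) * Real.Gamma (2 * H + 1) / (2 * lam ^ (2 * H)) =
    θ ^ 2 * Real.cosh (lam * t) * Real.Gamma (2 * H + 1) / (2 * lam ^ (2 * H)) -
      H * θ ^ 2 * ∫ u in (0 : ℝ)..t, Real.cosh (lam * (t - u)) * u ^ (2 * H - 1) :=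
  fou_cov_formula_general lam H θ t hlam hH ht
end
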